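/- If M is a bi-intuitionistic model of finite depth n and Σ is a finite set of L-formulas with |Σ| = s, then the number of equivalence classes of the greatest Σ-bisimulation ∼_Σ on M is at most 2^{2(n+1)s}_{n+2}, where 2^m_k is the iterated exponential defined by 2^m_0 = m and 2^m_{k+1} = 2^{(2^m_k)}. -/

import Mathlib

universe u

/-- Formulas of the intuitionistic modal language `L`, with a countably infinite
set of propositional variables indexed by `ℕ`. -/
inductive Fml : Type where
  | var : ℕ → Fml
  | bot : Fml
  | and : Fml → Fml → Fml
  | or : Fml → Fml → Fml
  | imp : Fml → Fml → Fml
  | dia : Fml → Fml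
  | box : Fml → Fml
  deriving DecidableEq

/-- A birelational structure: a set of worlds, a set of fallible worlds, an
intuitionistic relation `le` (`≼`), a modal relation `sq` (`⊑`) and a valuation. -/
structure KModel : Type (u + 1) where
  W : Type u
  fallible : Set W
  le : W → W → Prop
  sq : W → W → Prop
  val : ℕ → Set W

namespace KModel

/-- The satisfaction relation. -/
def Sat (M : KModel.{u}) : Fml → M.W → Prop
  | .var p, w => w ∈ M.val p
  | .bot, w => w ∈ M.fallible
  | .and φ ψ, w => Sat M φ w ∧ Sat M ψ w
  | .or φ ψ, w => Sat M φ w ∨ Sat M ψ w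
  | .imp φ ψ, w => ∀ v, M.le w v → Sat M φ v → Sat M ψ v
  | .dia φ, w => ∀ u, M.le w u → ∃ v, M.sq u v ∧ Sat M φ v
  | .box φ, w => ∀ u v, M.le w u → M.sq u v → Sat M φ v

/-- `M` is a bi-intuitionistic model: both relations are preorders, the set of
fallible worlds is closed under both relations, and the valuation is
`≼`-monotone and contains the fallible worlds. -/
def IsBiInt (M : KModel.{u}) : Prop :=
  (∀ w, M.le w w) ∧ (∀ u v w, M.le u v → M.le v w → M.le u w) ∧
  (∀ w, M.sq w w) ∧ (∀ u v w, M.sq u v → M.sq v w → M.sq u w) ∧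
  (∀ w v, w ∈ M.fallible → M.le w v → v ∈ M.fallible) ∧
  (∀ w v, w ∈ M.fallible → M.sq w v → v ∈ M.fallible) ∧
  (∀ p w v, w ∈ M.val p → M.le w v → v ∈ M.val p) ∧
  (∀ p w, w ∈ M.fallible → w ∈ M.val p)

/-- `⊑` is forth–up confluent for `≼`. -/
def ForthUp (M : KModel.{u}) : Prop :=
  ∀ w w' v, M.le w w' → M.sq w v → ∃ v', M.le v v' ∧ M.sq w' v'

/-- `⊑` is back–up confluent for `≼`. -/
def BackUp (M : KModel.{u}) : Prop :=
  ∀ w v v', M.sq w v → M.le v v' → ∃ w', M.le w w' ∧ M.sq w' v'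

/-- `⊑` is forth–down confluent for `≼`. -/
def ForthDown (M : KModel.{u}) : Prop :=
  ∀ w v v', M.le w v → M.sq v v' → ∃ w', M.sq w w' ∧ M.le w' v'

/-- `≼` is upward linear. -/
def UpLinear (M : KModel.{u}) : Prop :=
  ∀ w u v, M.le w u → M.le w v → M.le u v ∨ M.le v u

/-- There are no fallible worlds. -/
def Infallible (M : KModel.{u}) : Prop := M.fallible = ∅

/-- CS4 frames: back–up confluent bi-intuitionistic frames. -/
def IsCS4 (M : KModel.{u}) : Prop := M.IsBiInt ∧ M.BackUp

/-- IS4 frames: forth–up confluent infallible CS4 frames. -/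
def IsIS4 (M : KModel.{u}) : Prop := M.IsCS4 ∧ M.ForthUp ∧ M.Infallible

/-- GS4 frames: upward-linear IS4 frames. -/
def IsGS4 (M : KModel.{u}) : Prop := M.IsIS4 ∧ M.UpLinear

/-- GS4c frames: forth–down confluent GS4 frames. -/
def IsGS4c (M : KModel.{u}) : Prop := M.IsGS4 ∧ M.ForthDown

/-- S4I frames: forth–up and forth–down confluent infallible bi-intuitionistic frames. -/
def IsS4I (M : KModel.{u}) : Prop :=
  M.IsBiInt ∧ M.ForthUp ∧ M.ForthDown ∧ M.Infallible

end KModel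

namespace KModel

/-- The positive part `ℓ+(w)` of the `Σ`-label of a world. -/
def labelPlus (M : KModel.{u}) (S : Set Fml) (w : M.W) : Set Fml :=
  {φ | φ ∈ S ∧ M.Sat φ w}

/-- The part `ℓ◇(w)` of the `Σ`-label of a world: formulas of `Σ` satisfied at
no `⊑`-successor of `w`. -/
def labelDia (M : KModel.{u}) (S : Set Fml) (w : M.W) : Set Fml :=
  {φ | φ ∈ S ∧ ∀ v, M.sq w v → ¬ M.Sat φ v}

/-- `Z` is a `Σ`-bisimulation on `M`: it is forth–up and back–up confluent for
`≼` and preserves `Σ`-labels. -/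
def IsBisim (M : KModel.{u}) (S : Set Fml) (Z : M.W → M.W → Prop) : Prop :=
  (∀ w w' v, M.le w w' → Z w v → ∃ v', M.le v v' ∧ Z w' v') ∧
  (∀ w v v', Z w v → M.le v v' → ∃ w', M.le w w' ∧ Z w' v') ∧
  (∀ w v, Z w v →
    labelPlus M S w = labelPlus M S v ∧ labelDia M S w = labelDia M S v)

/-- The greatest `Σ`-bisimulation on `M`: the union of all `Σ`-bisimulations. -/
def GBisim (M : KModel.{u}) (S : Set Fml) (w v : M.W) : Prop :=
  ∃ Z, IsBisim M S Z ∧ Z w v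

/-- The quotient of a model by a relation `r` on its worlds: worlds are the
classes; a class is fallible iff it contains a fallible world; `[w] ≼ [v]` iff
`w' ≼ v'` for some `w' ∼ w`, `v' ∼ v`; the modal relation is the transitive
closure of the analogous relation; and `[w] ∈ V(p)` iff `w ∈ V(p)`. -/
def QuotModel (M : KModel.{u}) (r : M.W → M.W → Prop) : KModel.{u} where
  W := Quot r
  fallible := {x | ∃ w, Quot.mk r w = x ∧ w ∈ M.fallible}
  le := fun x y => ∃ w v, Quot.mk r w = x ∧ Quot.mk r v = y ∧ M.le w v
  sq := Relation.TransGen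
    (fun x y => ∃ w v, Quot.mk r w = x ∧ Quot.mk r v = y ∧ M.sq w v)
  val := fun p => {x | ∃ w, Quot.mk r w = x ∧ w ∈ M.val p}

end KModel

/-- A set of formulas closed under subformulas. -/
def SubClosed (S : Set Fml) : Prop :=
  (∀ φ ψ : Fml, φ.and ψ ∈ S → φ ∈ S ∧ ψ ∈ S) ∧
  (∀ φ ψ : Fml, φ.or ψ ∈ S → φ ∈ S ∧ ψ ∈ S) ∧
  (∀ φ ψ : Fml, φ.imp ψ ∈ S → φ ∈ S ∧ ψ ∈ S) ∧
  (∀ φ : Fml, φ.dia ∈ S → φ ∈ S) ∧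
  (∀ φ : Fml, φ.box ∈ S → φ ∈ S)

namespace KModel

/-- The strict order `w ≺ v`: `w ≼ v` but not `v ≼ w`. -/
def Slt (M : KModel.{u}) (w v : M.W) : Prop := M.le w v ∧ ¬ M.le v w

/-- The model has depth at most `n`: every chain `w₀ ≺ w₁ ≺ … ≺ w_m` has `m ≤ n`. -/
def DepthLE (M : KModel.{u}) (n : ℕ) : Prop :=
  ∀ (m : ℕ) (c : ℕ → M.W), (∀ i < m, M.Slt (c i) (c (i + 1))) → m ≤ n

/-- The model is shallow: its depth is finite. -/
def Shallow (M : KModel.{u}) : Prop := ∃ n : ℕ, M.DepthLE n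

/-- `≼` is downward linear. -/
def DownLinear (M : KModel.{u}) : Prop :=
  ∀ w u v, M.le u w → M.le v w → M.le u v ∨ M.le v u

/-- The model is forest-like: the set of `≼`-predecessors of any world is
totally ordered by `≼`. -/
def ForestLike (M : KModel.{u}) : Prop :=
  ∀ w u v, M.le u w → M.le v w → M.le u v ∨ M.le v u

end KModel

/-- The superexponential function: `iterExp m 0 = m` and
`iterExp m (k+1) = 2 ^ iterExp m k`. -/
def iterExp (m : ℕ) : ℕ → ℕ
  | 0 => m
  | k + 1 => 2 ^ iterExp m k


/-!
Give every world `w` its iterated label `τₖ(w)`: `τₖ₊₁(w)` records `ℓ(w)`, the set of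
`ℓ◇`-labels met in the `≼`-cluster of `w`, and the set of `τₖ(v)` for `w ≺ v`. On worlds
of height `< k`, `τₖ` already determines `τₖ₊₁`, so in a model of depth `n` equality of
`τₙ₊₁` is a `Σ`-bisimulation (the cluster labels supply the forth steps inside a cluster)
and `∼_Σ` has at most as many classes as `τₙ₊₁` has values. If `Nₖ` is the number of values
of `τₖ` on worlds of height `< k`, then `N₀ = 0` and `Nₖ₊₁ ≤ 2 ^ (2s + 2 ^ s + Nₖ)`, which
is dominated by the iterated exponential once `s ≥ 1`; for `Σ = ∅` all worlds are bisimilar.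
-/

theorem Set.image_eq_image_of_image_eq {α β γ : Type*} {f : α → β} {g : α → γ}
    {s t : Set α} (h : f '' s = f '' t)
    (hfg : ∀ x ∈ s, ∀ y ∈ t, f x = f y → g x = g y) : g '' s = g '' t := by
  apply Set.Subset.antisymm
  · rintro _ ⟨x, hx, rfl⟩
    obtain ⟨y, hy, hyx⟩ := h ▸ Set.mem_image_of_mem f hx
    exact ⟨y, hy, (hfg x hx y hy hyx.symm).symm⟩
  · rintro _ ⟨y, hy, rfl⟩
    obtain ⟨x, hx, hxy⟩ := h.symm ▸ Set.mem_image_of_mem f hy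
    exact ⟨x, hx, hfg x hx y hy hxy⟩

theorem Quot.finite_and_card_le_ncard_range {α β : Type*} {r : α → α → Prop} {f : α → β}
    (hf : ∀ a b, f a = f b → r a b) (hfin : (Set.range f).Finite) :
    Finite (Quot r) ∧ Nat.card (Quot r) ≤ (Set.range f).ncard := by
  let g : Set.range f → Quot r := fun y => Quot.mk r y.2.choose
  have hg : Function.Surjective g := Quot.ind fun a =>
    ⟨⟨f a, a, rfl⟩, Quot.sound (hf _ _ (Set.mem_range_self (f := f) a).choose_spec)⟩
  have := hfin.to_subtype
  exact ⟨Finite.of_surjective g hg, Nat.card_le_card_of_surjective g hg⟩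

theorem two_pow_add_two_pow_le {x y : ℕ} (hx : 1 ≤ x) (hy : 1 ≤ y) :
    2 ^ x + 2 ^ y ≤ 2 ^ (x + y) := by
  have h2x : 2 ≤ 2 ^ x := Nat.le_self_pow (by omega) 2
  have h2y : 2 ≤ 2 ^ y := Nat.le_self_pow (by omega) 2
  rw [pow_add]
  nlinarith

theorem two_mul_add_two_pow_le (s : ℕ) : 2 * s + 2 ^ s ≤ 2 ^ (2 * s) := by
  rcases Nat.eq_zero_or_pos s with rfl | hs
  · rfl
  have hsx : s + 1 ≤ 2 ^ s := Nat.lt_two_pow_self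
  rw [two_mul s, pow_add]
  nlinarith

theorem iterExp_succ_add_two_pow_le {m c : ℕ} (hm : 1 ≤ m) (hc : 1 ≤ c) :
    ∀ j, iterExp m (j + 1) + 2 ^ c ≤ iterExp (m + c) (j + 1)
  | 0 => two_pow_add_two_pow_le hm hc
  | j + 1 => by
    have ih := iterExp_succ_add_two_pow_le hm hc j
    have hc2 : c < 2 ^ c := Nat.lt_two_pow_self
    calc iterExp m (j + 2) + 2 ^ c ≤ 2 ^ (iterExp m (j + 1) + c) :=
          two_pow_add_two_pow_le Nat.one_le_two_pow hc
      _ ≤ iterExp (m + c) (j + 2) := Nat.pow_le_pow_right two_pos (by omega)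

/-- The invariant `2s + 2 ^ s + Nₖ ≤ 2^{2(k+1)s}_{k+1}` survives a step because raising the
base of the tower by `2s` absorbs the extra summand `2s + 2 ^ s ≤ 2 ^ (2s)`. -/
theorem add_le_iterExp_of_le_two_pow {s : ℕ} (hs : 1 ≤ s) {N : ℕ → ℕ} (h0 : N 0 = 0)
    (hN : ∀ k, N (k + 1) ≤ 2 ^ (2 * s + 2 ^ s + N k)) :
    ∀ k, 2 * s + 2 ^ s + N k ≤ iterExp (2 * (k + 1) * s) (k + 1)
  | 0 => by simpa [h0, iterExp] using two_mul_add_two_pow_le s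
  | k + 1 => by
    have ih := add_le_iterExp_of_le_two_pow hs h0 hN k
    calc 2 * s + 2 ^ s + N (k + 1)
        ≤ 2 ^ (2 * s) + 2 ^ iterExp (2 * (k + 1) * s) (k + 1) :=
          add_le_add (two_mul_add_two_pow_le s)
            ((hN k).trans (Nat.pow_le_pow_right two_pos ih))
      _ = iterExp (2 * (k + 1) * s) (k + 2) + 2 ^ (2 * s) := add_comm _ _
      _ ≤ iterExp (2 * (k + 1) * s + 2 * s) (k + 2) :=
          iterExp_succ_add_two_pow_le (Nat.mul_pos (by omega) hs) (by omega) (k + 1)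
      _ = iterExp (2 * (k + 1 + 1) * s) (k + 1 + 1) := by ring_nf

theorem le_iterExp_of_le_two_pow {s : ℕ} (hs : 1 ≤ s) {N : ℕ → ℕ} (h0 : N 0 = 0)
    (hN : ∀ k, N (k + 1) ≤ 2 ^ (2 * s + 2 ^ s + N k)) (n : ℕ) :
    N (n + 1) ≤ iterExp (2 * (n + 1) * s) (n + 2) :=
  (hN n).trans (Nat.pow_le_pow_right two_pos (add_le_iterExp_of_le_two_pow hs h0 hN n))

namespace KModel

variable {M : KModel.{u}}

theorem sat_mono (hM : M.IsBiInt) (φ : Fml) {w v : M.W} (hwv : M.le w v)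
    (hw : M.Sat φ w) : M.Sat φ v := by
  obtain ⟨-, htrans, -, -, hfall, -, hval, -⟩ := hM
  induction φ generalizing w v with
  | var p => exact hval p w v hw hwv
  | bot => exact hfall w v hw hwv
  | and φ ψ ihφ ihψ => exact ⟨ihφ hwv hw.1, ihψ hwv hw.2⟩
  | or φ ψ ihφ ihψ => exact hw.imp (ihφ hwv) (ihψ hwv)
  | imp φ ψ => exact fun u hvu => hw u (htrans _ _ _ hwv hvu)
  | dia φ => exact fun u hvu => hw u (htrans _ _ _ hwv hvu)
  | box φ => exact fun u x hvu => hw u x (htrans _ _ _ hwv hvu)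

theorem labelPlus_eq_of_le_of_le (hM : M.IsBiInt) (S : Set Fml) {w v : M.W}
    (hwv : M.le w v) (hvw : M.le v w) : M.labelPlus S w = M.labelPlus S v :=
  Set.ext fun φ => and_congr_right fun _ => ⟨sat_mono hM φ hwv, sat_mono hM φ hvw⟩

theorem isBisim_empty_top (hrefl : ∀ w, M.le w w) : M.IsBisim ∅ fun _ _ => True :=
  ⟨fun _ _ v _ _ => ⟨v, hrefl v, trivial⟩, fun w _ _ _ _ => ⟨w, hrefl w, trivial⟩,
    fun _ _ _ => by simp [labelPlus, labelDia]⟩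

theorem subsingleton_quot_gBisim_empty (hrefl : ∀ w, M.le w w) :
    Subsingleton (Quot (M.GBisim ∅)) :=
  ⟨fun a b => Quot.induction_on₂ a b fun _ _ =>
    Quot.sound ⟨_, isBisim_empty_top hrefl, trivial⟩⟩

def chainLengths (M : KModel.{u}) (w : M.W) : Set ℕ :=
  {m | ∃ c : ℕ → M.W, c 0 = w ∧ ∀ i < m, M.Slt (c i) (c (i + 1))}

noncomputable def height (M : KModel.{u}) (w : M.W) : ℕ := sSup (M.chainLengths w)

theorem zero_mem_chainLengths (w : M.W) : 0 ∈ M.chainLengths w :=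
  ⟨fun _ => w, rfl, fun _ hi => absurd hi (Nat.not_lt_zero _)⟩

theorem DepthLE.bddAbove_chainLengths {n : ℕ} (hdepth : M.DepthLE n) (w : M.W) :
    BddAbove (M.chainLengths w) :=
  ⟨n, fun m ⟨c, _, hc⟩ => hdepth m c hc⟩

theorem DepthLE.height_le {n : ℕ} (hdepth : M.DepthLE n) (w : M.W) : M.height w ≤ n :=
  csSup_le ⟨0, zero_mem_chainLengths w⟩ fun m ⟨c, _, hc⟩ => hdepth m c hc

theorem DepthLE.height_lt_height {n : ℕ} (hdepth : M.DepthLE n) {w v : M.W}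
    (hwv : M.Slt w v) : M.height v < M.height w := by
  have hv : M.height v ∈ M.chainLengths v :=
    Nat.sSup_mem ⟨0, zero_mem_chainLengths v⟩ (hdepth.bddAbove_chainLengths v)
  obtain ⟨c, rfl, hc⟩ := hv
  refine Nat.lt_of_succ_le (le_csSup (hdepth.bddAbove_chainLengths w)
    ⟨fun i => Nat.casesOn i w c, rfl, ?_⟩)
  rintro (_ | i) hi
  · exact hwv
  · exact hc i (by omega)

def clusterDiaLabels (M : KModel.{u}) (S : Set Fml) (w : M.W) : Set (Set Fml) :=
  M.labelDia S '' {u | M.le w u ∧ M.le u w}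

def IterLabel : ℕ → Type
  | 0 => PUnit
  | k + 1 => Set Fml × Set Fml × Set (Set Fml) × Set (IterLabel k)

/-- The `ℓ◇`-label comes first because it is the only component that may differ inside a
`≼`-cluster. -/
def iterLabel (M : KModel.{u}) (S : Set Fml) : (k : ℕ) → M.W → IterLabel k
  | 0, _ => PUnit.unit
  | k + 1, w => (M.labelDia S w, M.labelPlus S w, M.clusterDiaLabels S w,
      M.iterLabel S k '' {v | M.Slt w v})

variable {S : Set Fml}

theorem iterLabel_succ (k : ℕ) (w : M.W) :
    M.iterLabel S (k + 1) w = (M.labelDia S w, M.labelPlus S w, M.clusterDiaLabels S w,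
      M.iterLabel S k '' {v | M.Slt w v}) := rfl

theorem iterLabel_succ_eq_iff {k : ℕ} {w v : M.W} :
    M.iterLabel S (k + 1) w = M.iterLabel S (k + 1) v ↔
      M.labelDia S w = M.labelDia S v ∧ M.labelPlus S w = M.labelPlus S v ∧
        M.clusterDiaLabels S w = M.clusterDiaLabels S v ∧
        M.iterLabel S k '' {x | M.Slt w x} = M.iterLabel S k '' {x | M.Slt v x} := by
  change ((_, _, _, _) : Set Fml × Set Fml × Set (Set Fml) × Set (IterLabel k)) =
    (_, _, _, _) ↔ _
  simp only [Prod.mk.injEq]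

theorem iterLabel_succ_snd_eq_of_le_of_le (hM : M.IsBiInt) {k : ℕ} {w v : M.W}
    (hwv : M.le w v) (hvw : M.le v w) :
    (M.iterLabel S (k + 1) w).2 = (M.iterLabel S (k + 1) v).2 := by
  have htrans := hM.2.1
  have hup : ∀ x, M.le w x ↔ M.le v x := fun x => ⟨htrans _ _ _ hvw, htrans _ _ _ hwv⟩
  have hdown : ∀ x, M.le x w ↔ M.le x v :=
    fun x => ⟨fun h => htrans _ _ _ h hwv, fun h => htrans _ _ _ h hvw⟩
  simp only [iterLabel_succ, clusterDiaLabels, Slt, hup, hdown,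
    labelPlus_eq_of_le_of_le hM S hwv hvw]

theorem DepthLE.iterLabel_succ_eq_of_eq {n : ℕ} (hdepth : M.DepthLE n) :
    ∀ {k : ℕ} {w v : M.W}, M.height w < k → M.height v < k →
      M.iterLabel S k w = M.iterLabel S k v →
      M.iterLabel S (k + 1) w = M.iterLabel S (k + 1) v
  | 0, _, _, hw, _, _ => absurd hw (Nat.not_lt_zero _)
  | k + 1, w, v, hw, hv, heq => by
    obtain ⟨hdia, hplus, hcl, hsucc⟩ := iterLabel_succ_eq_iff.mp heq
    refine iterLabel_succ_eq_iff.mpr ?_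
    refine ⟨hdia, hplus, hcl, Set.image_eq_image_of_image_eq hsucc ?_⟩
    intro x hx y hy
    exact hdepth.iterLabel_succ_eq_of_eq
      ((hdepth.height_lt_height hx).trans_le (Nat.lt_succ_iff.mp hw))
      ((hdepth.height_lt_height hy).trans_le (Nat.lt_succ_iff.mp hv))

theorem iterLabel_forth (hM : M.IsBiInt) {n : ℕ} (hdepth : M.DepthLE n) {w w' v : M.W}
    (hww' : M.le w w') (heq : M.iterLabel S (n + 1) w = M.iterLabel S (n + 1) v) :
    ∃ v', M.le v v' ∧ M.iterLabel S (n + 1) w' = M.iterLabel S (n + 1) v' := by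
  obtain ⟨-, -, hcl, hsucc⟩ := iterLabel_succ_eq_iff.mp heq
  by_cases hw'w : M.le w' w
  · obtain ⟨u, ⟨hvu, huv⟩, hu⟩ : M.labelDia S w' ∈ M.clusterDiaLabels S v :=
      hcl ▸ ⟨w', ⟨hww', hw'w⟩, rfl⟩
    refine ⟨u, hvu, Prod.ext hu.symm ?_⟩
    rw [iterLabel_succ_snd_eq_of_le_of_le hM hw'w hww', congrArg Prod.snd heq,
      iterLabel_succ_snd_eq_of_le_of_le hM hvu huv]
  · obtain ⟨v', hvv', hv'⟩ : M.iterLabel S n w' ∈ M.iterLabel S n '' {x | M.Slt v x} :=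
      hsucc ▸ Set.mem_image_of_mem _ ⟨hww', hw'w⟩
    have hheight {x y : M.W} (hxy : M.Slt x y) : M.height y < n :=
      (hdepth.height_lt_height hxy).trans_le (hdepth.height_le x)
    exact ⟨v', hvv'.1,
      (hdepth.iterLabel_succ_eq_of_eq (hheight hvv') (hheight ⟨hww', hw'w⟩) hv').symm⟩

theorem isBisim_iterLabel (hM : M.IsBiInt) {n : ℕ} (hdepth : M.DepthLE n) :
    M.IsBisim S fun w v => M.iterLabel S (n + 1) w = M.iterLabel S (n + 1) v :=
  ⟨fun _ _ _ hle heq => iterLabel_forth hM hdepth hle heq,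
    fun _ _ _ heq hle =>
      let ⟨w', hww', hw'⟩ := iterLabel_forth hM hdepth hle heq.symm
      ⟨w', hww', hw'.symm⟩,
    fun _ _ heq =>
      let ⟨hdia, hplus, _⟩ := iterLabel_succ_eq_iff.mp heq
      ⟨hplus, hdia⟩⟩

def lowIterLabels (M : KModel.{u}) (S : Set Fml) (k : ℕ) : Set (IterLabel k) :=
  M.iterLabel S k '' {w | M.height w < k}

theorem lowIterLabels_zero : M.lowIterLabels S 0 = ∅ :=
  Set.image_eq_empty.mpr (Set.eq_empty_of_forall_notMem fun _ hw => Nat.not_lt_zero _ hw)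

theorem DepthLE.lowIterLabels_succ_subset {n : ℕ} (hdepth : M.DepthLE n) (k : ℕ) :
    M.lowIterLabels S (k + 1) ⊆
      (𝒫 S ×ˢ 𝒫 S ×ˢ 𝒫 𝒫 S ×ˢ 𝒫 M.lowIterLabels S k : Set (IterLabel (k + 1))) := by
  rintro _ ⟨w, hw, rfl⟩
  refine ⟨fun _ hφ => hφ.1, fun _ hφ => hφ.1, ?_, ?_⟩
  · rintro _ ⟨u, -, rfl⟩ _ hφ
    exact hφ.1
  · rintro _ ⟨v, hwv, rfl⟩
    exact ⟨v, (hdepth.height_lt_height hwv).trans_le (Nat.lt_succ_iff.mp hw), rfl⟩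

theorem DepthLE.finite_lowIterLabels {n : ℕ} (hdepth : M.DepthLE n) (S : Finset Fml) :
    ∀ k, (M.lowIterLabels S k).Finite
  | 0 => lowIterLabels_zero ▸ Set.finite_empty
  | k + 1 =>
    have hS := S.finite_toSet.powerset
    (hS.prod (hS.prod (hS.powerset.prod (hdepth.finite_lowIterLabels S k).powerset))).subset
      (hdepth.lowIterLabels_succ_subset k)

theorem DepthLE.ncard_lowIterLabels_succ_le {n : ℕ} (hdepth : M.DepthLE n) (S : Finset Fml)
    (k : ℕ) : (M.lowIterLabels S (k + 1)).ncard ≤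
      2 ^ (2 * S.card + 2 ^ S.card + (M.lowIterLabels S k).ncard) := by
  have hS := S.finite_toSet.powerset
  have hfin := hdepth.finite_lowIterLabels S k
  calc (M.lowIterLabels S (k + 1)).ncard
      ≤ (𝒫 S ×ˢ 𝒫 S ×ˢ 𝒫 𝒫 S ×ˢ 𝒫 M.lowIterLabels S k : Set (IterLabel (k + 1))).ncard :=
        Set.ncard_le_ncard (hdepth.lowIterLabels_succ_subset k)
          (hS.prod (hS.prod (hS.powerset.prod hfin.powerset)))
    _ = 2 ^ S.card * (2 ^ S.card * (2 ^ 2 ^ S.card * 2 ^ (M.lowIterLabels S k).ncard)) := by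
        simp only [Set.ncard_prod, Set.ncard_powerset _ hS, Set.ncard_powerset _ hfin,
          Set.ncard_powerset _ S.finite_toSet, Set.ncard_coe_finset]
    _ = 2 ^ (2 * S.card + 2 ^ S.card + (M.lowIterLabels S k).ncard) := by
        rw [two_mul, pow_add, pow_add, pow_add, mul_assoc, mul_assoc]

end KModel

/-- **Bound on the number of bisimulation classes of a shallow model.** If `M`
is a bi-intuitionistic model of finite depth `n` and `Σ` is a finite set of
`L`-formulas with `|Σ| = s`, then the number of equivalence classes of the
greatest `Σ`-bisimulation `∼_Σ` on `M` is at most `2^{2(n+1)s}_{n+2}`. -/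
theorem bisim_classes_bound (M : KModel.{u}) (hM : M.IsBiInt) (n : ℕ)
    (hdepth : M.DepthLE n) (S : Finset Fml) :
    Finite (Quot (M.GBisim ↑S)) ∧
    Nat.card (Quot (M.GBisim ↑S)) ≤ iterExp (2 * (n + 1) * S.card) (n + 2) := by
  rcases S.eq_empty_or_nonempty with rfl | hS
  · have : Subsingleton (Quot (M.GBisim ↑(∅ : Finset Fml))) := by
      rw [Finset.coe_empty]
      exact M.subsingleton_quot_gBisim_empty hM.1
    exact ⟨Finite.of_subsingleton,
      (Finite.card_le_one_iff_subsingleton.mpr this).trans Nat.one_le_two_pow⟩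
  have hrange : Set.range (M.iterLabel S (n + 1)) ⊆ M.lowIterLabels S (n + 1) :=
    Set.range_subset_iff.mpr fun w => ⟨w, Nat.lt_succ_of_le (hdepth.height_le w), rfl⟩
  have hfin := hdepth.finite_lowIterLabels S (n + 1)
  obtain ⟨hquot, hcard⟩ := Quot.finite_and_card_le_ncard_range (r := M.GBisim S)
    (fun w v h => ⟨_, M.isBisim_iterLabel hM hdepth, h⟩) (hfin.subset hrange)
  refine ⟨hquot, hcard.trans ((Set.ncard_le_ncard hrange hfin).trans ?_)⟩
  exact le_iterExp_of_le_two_pow (N := fun k => (M.lowIterLabels S k).ncard) hS.card_pos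
    (by rw [KModel.lowIterLabels_zero, Set.ncard_empty])
    (hdepth.ncard_lowIterLabels_succ_le S) n
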